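/- For every R ⊆ C: R is an (α,β) upper distribution consistent set (i.e., Apr_R^β(Y_i) = Apr_C^β(Y_i) for every decision class Y_i) if and only if μ_R = μ_C. -/
import Mathlib


/-- The indiscernibility class `[x]_R` of `x` for the attribute subset `R`:
all objects agreeing with `x` on every attribute in `R`. -/
def cls {U V A : Type*} (f : A → U → V) (R : Finset A) (x : U) : Set U :=
  {y | ∀ a ∈ R, f a x = f a y}

/-- Classical lower approximation of `X` with respect to `IND(R)`. -/
def lowerA {U V A : Type*} (f : A → U → V) (R : Finset A) (X : Set U) : Set U :=
  {x | cls f R x ⊆ X}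

/-- Classical upper approximation of `X` with respect to `IND(R)`. -/
def upperA {U V A : Type*} (f : A → U → V) (R : Finset A) (X : Set U) : Set U :=
  {x | (cls f R x ∩ X).Nonempty}

/-- α-probabilistic lower approximation: `{x | |[x]_R ∩ X| ≥ α·|[x]_R|}`. -/
noncomputable def aprLow {U V A : Type*} (f : A → U → V) (R : Finset A) (α : ℝ)
    (X : Set U) : Set U :=
  {x | α * ((cls f R x).ncard : ℝ) ≤ (((cls f R x) ∩ X).ncard : ℝ)}

/-- β-probabilistic upper approximation: `{x | |[x]_R ∩ X| > β·|[x]_R|}`. -/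
noncomputable def aprUp {U V A : Type*} (f : A → U → V) (R : Finset A) (β : ℝ)
    (X : Set U) : Set U :=
  {x | β * ((cls f R x).ncard : ℝ) < (((cls f R x) ∩ X).ncard : ℝ)}

/-- `η_R = (Σ_{i=1}^M |lower_R(apr_C^α(Y_i))|)/(|U|·M)`, the sum running over the
decision classes `Y_i = d⁻¹(v)`, `v ∈ d(U)`. -/
noncomputable def eta {U V A : Type*} [Fintype U] [DecidableEq V] (f : A → U → V)
    (C : Finset A) (d : U → V) (α : ℝ) (R : Finset A) : ℝ :=
  (∑ v ∈ Finset.univ.image d,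
      ((lowerA f R (aprLow f C α (d ⁻¹' {v}))).ncard : ℝ)) /
    ((Fintype.card U : ℝ) * ((Finset.univ.image d).card : ℝ))

/-- `μ_R = (Σ_{i=1}^M |upper_R(Apr_C^β(Y_i))|)/(|U|·M)`, the sum running over the
decision classes `Y_i = d⁻¹(v)`, `v ∈ d(U)`. -/
noncomputable def mu {U V A : Type*} [Fintype U] [DecidableEq V] (f : A → U → V)
    (C : Finset A) (d : U → V) (β : ℝ) (R : Finset A) : ℝ :=
  (∑ v ∈ Finset.univ.image d,
      ((upperA f R (aprUp f C β (d ⁻¹' {v}))).ncard : ℝ)) /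
    ((Fintype.card U : ℝ) * ((Finset.univ.image d).card : ℝ))

/-- `R` is an (α,β) lower distribution consistent set:
`apr_R^α(Y_i) = apr_C^α(Y_i)` for every decision class `Y_i`. -/
def LowerConsistent {U V A : Type*} [Fintype U] [DecidableEq V] (f : A → U → V)
    (C : Finset A) (d : U → V) (α : ℝ) (R : Finset A) : Prop :=
  ∀ v ∈ Finset.univ.image d, aprLow f R α (d ⁻¹' {v}) = aprLow f C α (d ⁻¹' {v})

/-- `R` is an (α,β) upper distribution consistent set:
`Apr_R^β(Y_i) = Apr_C^β(Y_i)` for every decision class `Y_i`. -/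
def UpperConsistent {U V A : Type*} [Fintype U] [DecidableEq V] (f : A → U → V)
    (C : Finset A) (d : U → V) (β : ℝ) (R : Finset A) : Prop :=
  ∀ v ∈ Finset.univ.image d, aprUp f R β (d ⁻¹' {v}) = aprUp f C β (d ⁻¹' {v})

/-- `R` is an (α,β) lower distribution reduct: a lower distribution consistent set
no proper subset of which is lower distribution consistent. -/
def LowerReduct {U V A : Type*} [Fintype U] [DecidableEq V] (f : A → U → V)
    (C : Finset A) (d : U → V) (α : ℝ) (R : Finset A) : Prop :=
  LowerConsistent f C d α R ∧ ∀ R' ⊂ R, ¬ LowerConsistent f C d α R'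

/-- `R` is an (α,β) upper distribution reduct: an upper distribution consistent set
no proper subset of which is upper distribution consistent. -/
def UpperReduct {U V A : Type*} [Fintype U] [DecidableEq V] (f : A → U → V)
    (C : Finset A) (d : U → V) (β : ℝ) (R : Finset A) : Prop :=
  UpperConsistent f C d β R ∧ ∀ R' ⊂ R, ¬ UpperConsistent f C d β R'

section Aux

variable {U V A : Type*}

lemma mem_cls_self (f : A → U → V) (R : Finset A) (x : U) : x ∈ cls f R x :=
  fun _ _ => rfl

lemma cls_eq_of_mem {f : A → U → V} {R : Finset A} {x y : U} (h : y ∈ cls f R x) :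
    cls f R x = cls f R y := by
  ext z
  constructor <;> intro hz a ha
  · exact (h a ha).symm.trans (hz a ha)
  · exact (h a ha).trans (hz a ha)

lemma upperA_aprUp_self (f : A → U → V) (R : Finset A) (β : ℝ) (X : Set U) :
    upperA f R (aprUp f R β X) = aprUp f R β X := by
  ext x
  constructor
  · rintro ⟨y, hy, hyS⟩
    have h := cls_eq_of_mem hy
    show β * ((cls f R x).ncard : ℝ) < (((cls f R x) ∩ X).ncard : ℝ)
    rw [h]
    exact hyS
  · intro hx
    exact ⟨x, mem_cls_self f R x, hx⟩

lemma saturated_mem {f : A → U → V} {R : Finset A} {S : Set U}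
    (h : upperA f R S = S) {x y : U} (hx : x ∈ S) (hy : y ∈ cls f R x) : y ∈ S := by
  rw [← h]
  exact ⟨x, fun a ha => (hy a ha).symm, hx⟩

lemma subset_upperA (f : A → U → V) (R : Finset A) (S : Set U) :
    S ⊆ upperA f R S := fun x hx => ⟨x, mem_cls_self f R x, hx⟩

lemma aprUp_eq_of_saturated [Fintype U] {f : A → U → V} {R C : Finset A} (hRC : R ⊆ C)
    {β : ℝ} {X : Set U} (hsat : upperA f R (aprUp f C β X) = aprUp f C β X) :
    aprUp f R β X = aprUp f C β X := by
  classical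
  ext x
  set T : Finset U := (Set.toFinite (cls f R x)).toFinset with hT
  have hmemT : ∀ y, y ∈ T ↔ y ∈ cls f R x := by
    intro y; simp [hT, Set.Finite.mem_toFinset, cls]
  set g : U → ({a // a ∈ C} → V) := fun y a => f a.1 y with hg
  have key : ∀ y ∈ T, (T.filter fun z => g z = g y) = (Set.toFinite (cls f C y)).toFinset := by
    intro y hy
    have hyR : y ∈ cls f R x := (hmemT y).mp hy
    ext z
    simp only [Finset.mem_filter, hmemT, Set.Finite.mem_toFinset, hg, funext_iff,
      Subtype.forall]
    constructor
    · rintro ⟨hzR, hzy⟩ a ha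
      exact (hzy a ha).symm
    · intro hzy
      refine ⟨fun a ha => ?_, fun a ha => (hzy a ha).symm⟩
      exact (hyR a ha).trans (hzy a (hRC ha))
  -- cardinal identities
  have hTcard : ((cls f R x).ncard : ℝ) = (T.card : ℝ) := by
    rw [Set.ncard_eq_toFinset_card _ (Set.toFinite _)]
  have hTX : (Set.toFinite ((cls f R x) ∩ X)).toFinset = T.filter (· ∈ X) := by
    ext z
    rw [Set.Finite.mem_toFinset, Finset.mem_filter, hmemT, Set.mem_inter_iff]
  have hTXcard : (((cls f R x) ∩ X).ncard : ℝ) = ((T.filter (· ∈ X)).card : ℝ) := by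
    rw [Set.ncard_eq_toFinset_card _ (Set.toFinite _), hTX]
  have fibcard : ∀ y ∈ T, (((T.filter fun z => g z = g y).card : ℝ)) = ((cls f C y).ncard : ℝ) := by
    intro y hy
    rw [key y hy, Set.ncard_eq_toFinset_card _ (Set.toFinite _)]
  have fibXcard : ∀ y ∈ T,
      ((((T.filter fun z => g z = g y).filter (· ∈ X)).card : ℝ)) = (((cls f C y) ∩ X).ncard : ℝ) := by
    intro y hy
    have hfe : (Set.toFinite ((cls f C y) ∩ X)).toFinset
        = (Set.toFinite (cls f C y)).toFinset.filter (· ∈ X) := by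
      ext z
      rw [Set.Finite.mem_toFinset, Finset.mem_filter, Set.Finite.mem_toFinset,
        Set.mem_inter_iff]
    rw [key y hy, Set.ncard_eq_toFinset_card _ (Set.toFinite _), hfe]
  have hsumT : T.card = ∑ t ∈ T.image g, (T.filter fun z => g z = t).card :=
    Finset.card_eq_sum_card_image g T
  have hsumTX : (T.filter (· ∈ X)).card
      = ∑ t ∈ T.image g, ((T.filter fun z => g z = t).filter (· ∈ X)).card := by
    rw [Finset.card_eq_sum_card_fiberwise
      (f := g) (t := T.image g) (s := T.filter (· ∈ X))
      (fun z hz => Finset.mem_image_of_mem g (Finset.mem_of_mem_filter z hz))]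
    apply Finset.sum_congr rfl
    intro t _
    congr 1
    rw [Finset.filter_comm]
  have hlhs : (x ∈ aprUp f R β X) ↔
      (∑ t ∈ T.image g, β * ((T.filter fun z => g z = t).card : ℝ))
        < ∑ t ∈ T.image g, (((T.filter fun z => g z = t).filter (· ∈ X)).card : ℝ) := by
    show (β * ((cls f R x).ncard : ℝ) < (((cls f R x) ∩ X).ncard : ℝ)) ↔ _
    rw [hTcard, hTXcard, hsumT, hsumTX]
    push_cast
    rw [Finset.mul_sum]
  by_cases hx : x ∈ aprUp f C β X
  · have hmem : ∀ y ∈ T, y ∈ aprUp f C β X := fun y hy =>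
      saturated_mem hsat hx ((hmemT y).mp hy)
    have hstrict : ∀ t ∈ T.image g,
        β * ((T.filter fun z => g z = t).card : ℝ)
          < (((T.filter fun z => g z = t).filter (· ∈ X)).card : ℝ) := by
      intro t ht
      obtain ⟨y, hyT, rfl⟩ := Finset.mem_image.mp ht
      rw [fibcard y hyT, fibXcard y hyT]
      exact hmem y hyT
    have hne : (T.image g).Nonempty :=
      ⟨g x, Finset.mem_image_of_mem g ((hmemT x).mpr (mem_cls_self f R x))⟩
    simp only [hx, iff_true]
    exact hlhs.mpr (Finset.sum_lt_sum_of_nonempty hne hstrict)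
  · have hmem : ∀ y ∈ T, y ∉ aprUp f C β X := by
      intro y hy hyS
      exact hx (saturated_mem hsat hyS (fun a ha => ((hmemT y).mp hy a ha).symm))
    have hle : ∀ t ∈ T.image g,
        (((T.filter fun z => g z = t).filter (· ∈ X)).card : ℝ)
          ≤ β * ((T.filter fun z => g z = t).card : ℝ) := by
      intro t ht
      obtain ⟨y, hyT, rfl⟩ := Finset.mem_image.mp ht
      rw [fibcard y hyT, fibXcard y hyT]
      exact not_lt.mp (hmem y hyT)
    simp only [hx, iff_false]
    intro hcontra
    exact absurd (Finset.sum_le_sum hle) (not_le.mpr (hlhs.mp hcontra))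

end Aux

theorem upperConsistent_iff_mu_eq {U V A : Type*} [Fintype U] [Nonempty U]
    [DecidableEq V] (f : A → U → V) (C : Finset A) (d : U → V)
    (α β : ℝ) (hβ0 : 0 ≤ β) (hβα : β < α) (hα1 : α ≤ 1)
    (R : Finset A) (hR : R ⊆ C) :
    UpperConsistent f C d β R ↔ mu f C d β R = mu f C d β C := by
  classical
  set M : Finset V := Finset.univ.image d with hM
  have hMne : M.Nonempty :=
    ⟨d (Classical.arbitrary U), Finset.mem_image_of_mem d (Finset.mem_univ _)⟩
  have hD : (0 : ℝ) < (Fintype.card U : ℝ) * (M.card : ℝ) := by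
    have h1 : 0 < Fintype.card U := Fintype.card_pos
    have h2 : 0 < M.card := Finset.card_pos.mpr hMne
    positivity
  constructor
  · intro h
    unfold mu
    congr 1
    apply Finset.sum_congr rfl
    intro v hv
    rw [upperA_aprUp_self f C, ← h v hv, upperA_aprUp_self f R]
  · intro h
    have hsum : ∑ v ∈ M, ((upperA f C (aprUp f C β (d ⁻¹' {v}))).ncard : ℝ)
        = ∑ v ∈ M, ((upperA f R (aprUp f C β (d ⁻¹' {v}))).ncard : ℝ) := by
      have h' := h.symm
      unfold mu at h'
      rw [div_eq_div_iff hD.ne' hD.ne'] at h'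
      exact mul_right_cancel₀ hD.ne' h'
    have hle : ∀ v ∈ M, ((upperA f C (aprUp f C β (d ⁻¹' {v}))).ncard : ℝ)
        ≤ ((upperA f R (aprUp f C β (d ⁻¹' {v}))).ncard : ℝ) := by
      intro v _
      rw [upperA_aprUp_self]
      exact_mod_cast Set.ncard_le_ncard (subset_upperA f R _) (Set.toFinite _)
    have hterm := (Finset.sum_eq_sum_iff_of_le hle).mp hsum
    intro v hv
    have heq := hterm v hv
    rw [upperA_aprUp_self] at heq
    have hsat : upperA f R (aprUp f C β (d ⁻¹' {v})) = aprUp f C β (d ⁻¹' {v}) := by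
      refine (Set.eq_of_subset_of_ncard_le (subset_upperA f R _) ?_ (Set.toFinite _)).symm
      exact_mod_cast heq.ge
    exact aprUp_eq_of_saturated hR hsat
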